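/- Gibbs variational principle: for a probability measure P on a measurable space and a bounded measurable function G, log ∫ e^G dP = sup_Q ( ∫ G dQ - H(Q | P) ), where the supremum is over probability measures Q absolutely continuous with respect to P, and H(Q|P) = ∫ (dQ/dP) log(dQ/dP) dP is the relative entropy. The supremum is attained by dQ* = e^G dP / ∫ e^G dP. -/

import Mathlib

/-!
Write `Z = ∫ exp G dP` and `P_G = P.tilted G` for the Gibbs measure with density `exp G / Z`.
For `Q ≪ P` the log-likelihood ratios satisfy `llr Q P_G = llr Q P - G + log Z`, so Gibbs'
inequality `0 ≤ H(Q | P_G)` is exactly `∫ G dQ - H(Q | P) ≤ log Z`, and for `Q = P_G` the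
density's logarithm is `G - log Z`, which gives equality.
-/

open MeasureTheory Real

section

variable {α : Type*} [MeasurableSpace α] {μ ν : Measure α} {f : α → ℝ}

theorem integral_sub_integral_llr_le_log_integral_exp [IsProbabilityMeasure μ] [SigmaFinite ν]
    (hμν : μ ≪ ν) (h_int : Integrable (llr μ ν) μ) (hfμ : Integrable f μ)
    (hfν : Integrable (fun x ↦ exp (f x)) ν) :
    ∫ x, f x ∂μ - ∫ x, llr μ ν x ∂μ ≤ log (∫ x, exp (f x) ∂ν) := by
  have : NeZero ν := ⟨fun h ↦ IsProbabilityMeasure.ne_zero μ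
    (Measure.absolutelyContinuous_zero_iff.1 (h ▸ hμν))⟩
  have := isProbabilityMeasure_tilted hfν
  have hgibbs := InformationTheory.integral_llr_add_sub_measure_univ_nonneg
    (hμν.trans (absolutelyContinuous_tilted hfν)) (integrable_llr_tilted_right hμν hfμ h_int hfν)
  rw [probReal_univ, probReal_univ, integral_llr_tilted_right hμν hfμ hfν h_int] at hgibbs
  linarith

lemma llr_tilted_self_ae_eq [SigmaFinite μ] (hfμ : Integrable (fun x ↦ exp (f x)) μ) :
    llr (μ.tilted f) μ =ᵐ[μ.tilted f] fun x ↦ f x - log (∫ x, exp (f x) ∂μ) :=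
  (tilted_absolutelyContinuous μ f).ae_le (log_rnDeriv_tilted_left_self hfμ)

lemma integrable_llr_tilted_self [SigmaFinite μ] (hfμ : Integrable (fun x ↦ exp (f x)) μ)
    (hf : Integrable f (μ.tilted f)) :
    Integrable (llr (μ.tilted f) μ) (μ.tilted f) :=
  (hf.sub (integrable_const _)).congr (llr_tilted_self_ae_eq hfμ).symm

lemma integral_sub_log_integral_exp_tilted [IsProbabilityMeasure μ]
    (hfμ : Integrable (fun x ↦ exp (f x)) μ) (hf : Integrable f (μ.tilted f)) :
    ∫ x, (f x - log (∫ x, exp (f x) ∂μ)) ∂(μ.tilted f) =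
      ∫ x, f x ∂(μ.tilted f) - log (∫ x, exp (f x) ∂μ) := by
  have := isProbabilityMeasure_tilted hfμ
  rw [integral_sub hf (integrable_const _), integral_const, probReal_univ, one_smul]

lemma integral_llr_tilted_self [IsProbabilityMeasure μ] (hfμ : Integrable (fun x ↦ exp (f x)) μ)
    (hf : Integrable f (μ.tilted f)) :
    ∫ x, llr (μ.tilted f) μ x ∂(μ.tilted f) =
      ∫ x, f x ∂(μ.tilted f) - log (∫ x, exp (f x) ∂μ) := by
  rw [integral_congr_ae (llr_tilted_self_ae_eq hfμ), integral_sub_log_integral_exp_tilted hfμ hf]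

lemma integral_tilted_density_mul_log [IsProbabilityMeasure μ]
    (hfμ : Integrable (fun x ↦ exp (f x)) μ) (hf : Integrable f (μ.tilted f)) :
    ∫ x, exp (f x) / (∫ x, exp (f x) ∂μ) * log (exp (f x) / ∫ x, exp (f x) ∂μ) ∂μ =
      ∫ x, f x ∂(μ.tilted f) - log (∫ x, exp (f x) ∂μ) := by
  have hZ := (integral_exp_pos hfμ).ne'
  rw [← integral_sub_log_integral_exp_tilted hfμ hf, integral_tilted]
  simp only [log_div (exp_pos _).ne' hZ, log_exp, smul_eq_mul]

end

/-- Gibbs variational principle: `log ∫ e^G dP` is the maximum over probability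
measures `Q ≪ P` of `∫ G dQ - H(Q|P)`, and the maximum is attained by the Gibbs
measure with density `e^G / ∫ e^G dP`. -/
theorem stmt11 {α : Type*} [MeasurableSpace α] (P : Measure α) [IsProbabilityMeasure P]
    (G : α → ℝ) (hGmeas : Measurable G) (hGbdd : ∃ C : ℝ, ∀ a, |G a| ≤ C) :
    IsGreatest {r : ℝ | ∃ Q : Measure α, IsProbabilityMeasure Q ∧ Q ≪ P ∧
        Integrable (fun a => (Q.rnDeriv P a).toReal * Real.log (Q.rnDeriv P a).toReal) P ∧
        r = (∫ a, G a ∂Q) -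
          ∫ a, (Q.rnDeriv P a).toReal * Real.log (Q.rnDeriv P a).toReal ∂P}
      (Real.log (∫ a, Real.exp (G a) ∂P)) ∧
    Real.log (∫ a, Real.exp (G a) ∂P) =
      (∫ a, G a ∂(P.withDensity
          (fun a => ENNReal.ofReal (Real.exp (G a) / ∫ a', Real.exp (G a') ∂P))))
        - ∫ a, (Real.exp (G a) / ∫ a', Real.exp (G a') ∂P) *
            Real.log (Real.exp (G a) / ∫ a', Real.exp (G a') ∂P) ∂P := by
  obtain ⟨C, hC⟩ := hGbdd
  have hG (Q : Measure α) [IsFiniteMeasure Q] : Integrable G Q :=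
    .of_bound hGmeas.aestronglyMeasurable C (.of_forall hC)
  have hexpG : Integrable (fun a ↦ exp (G a)) P :=
    .of_bound hGmeas.exp.aestronglyMeasurable (exp C) (.of_forall fun a ↦ by
      rw [norm_of_nonneg (exp_pos _).le]
      exact exp_le_exp.2 (abs_le.1 (hC a)).2)
  have hT : P.tilted G ≪ P := tilted_absolutelyContinuous P G
  refine ⟨⟨⟨P.tilted G, isProbabilityMeasure_tilted hexpG, hT, ?_, ?_⟩, ?_⟩, ?_⟩
  · exact (integrable_rnDeriv_mul_log_iff hT).2 (integrable_llr_tilted_self hexpG (hG _))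
  · rw [integral_rnDeriv_mul_log hT, integral_llr_tilted_self hexpG (hG _)]
    ring
  · rintro r ⟨Q, hQ, hQP, hQ_int, rfl⟩
    rw [integral_rnDeriv_mul_log hQP]
    exact integral_sub_integral_llr_le_log_integral_exp hQP
      ((integrable_rnDeriv_mul_log_iff hQP).1 hQ_int) (hG Q) hexpG
  · -- the `withDensity` measure of the statement is `P.tilted G` by definition
    change _ = ∫ a, G a ∂(P.tilted G) - _
    linarith [integral_tilted_density_mul_log hexpG (hG _)]
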